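/- With L_train(θ, λ) = L(θ) + λ·R(θ), L m-strongly convex and R convex, the best-response map satisfies the Lipschitz-type bound ‖θ*(λ₁) − θ*(λ₂)‖ ≤ |λ₁ − λ₂| · ‖∇R(θ*(λ₂))‖ / m for all λ₁, λ₂ ≥ 0. -/

import Mathlib

open Set

open scoped RealInnerProductSpace

/-- First-order condition for a convex differentiable function. -/
lemma aux_convex_fderiv_le {n : ℕ} {f : EuclideanSpace ℝ (Fin n) → ℝ}
    (hf : ConvexOn ℝ univ f) (hd : Differentiable ℝ f)
    (x y : EuclideanSpace ℝ (Fin n)) :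
    fderiv ℝ f x (y - x) ≤ f y - f x := by
  set φ : ℝ → ℝ := fun t => f (x + t • (y - x)) with hφdef
  have hline : ∀ t : ℝ, HasDerivAt (fun t : ℝ => x + t • (y - x)) (y - x) t := by
    intro t
    simpa using ((hasDerivAt_id t).smul_const (y - x)).const_add x
  have hφd : HasDerivAt φ (fderiv ℝ f x (y - x)) 0 := by
    have h := (hd (x + (0 : ℝ) • (y - x))).hasFDerivAt.comp_hasDerivAt 0 (hline 0)
    simp only [zero_smul, add_zero] at h
    exact h
  have hφc : ConvexOn ℝ univ φ := by
    have h := hf.comp_affineMap (AffineMap.lineMap x y)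
    have hs : (AffineMap.lineMap x y : ℝ →ᵃ[ℝ] EuclideanSpace ℝ (Fin n)) ⁻¹' univ = univ := by
      simp
    rw [hs] at h
    have heq : φ = f ∘ AffineMap.lineMap x y := by
      funext t
      simp [hφdef, AffineMap.lineMap_apply, vsub_eq_sub, vadd_eq_add, add_comm]
    rw [heq]
    exact h
  have hslope := hφc.le_slope_of_hasDerivAt (mem_univ (0 : ℝ)) (mem_univ (1 : ℝ)) one_pos hφd
  have h0 : φ 0 = f x := by simp [hφdef]
  have h1 : φ 1 = f y := by simp [hφdef]
  have hs : slope φ 0 1 = f y - f x := by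
    rw [slope_def_field, h0, h1]
    simp
  linarith [hslope, hs.le, hs.ge]

/-- The Fréchet derivative applied to a vector equals the inner product with the gradient. -/
lemma aux_fderiv_eq_inner {n : ℕ} {f : EuclideanSpace ℝ (Fin n) → ℝ}
    (hd : Differentiable ℝ f) (x v : EuclideanSpace ℝ (Fin n)) :
    fderiv ℝ f x v = ⟪gradient f x, v⟫ := by
  have h := (hd x).hasGradientAt
  rw [hasGradientAt_iff_hasFDerivAt] at h
  rw [h.fderiv]
  exact InnerProductSpace.toDual_apply_apply

/-- Strong monotonicity of the derivative of a strongly convex function. -/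
lemma aux_strong_mono {n : ℕ} {m : ℝ} {L : EuclideanSpace ℝ (Fin n) → ℝ}
    (hL : StrongConvexOn univ m L) (hLd : Differentiable ℝ L)
    (x y : EuclideanSpace ℝ (Fin n)) :
    m * ‖x - y‖ ^ 2 ≤ fderiv ℝ L x (x - y) - fderiv ℝ L y (x - y) := by
  set g : EuclideanSpace ℝ (Fin n) → ℝ := fun z => L z - m / 2 * ‖z‖ ^ 2 with hgdef
  have hgc : ConvexOn ℝ univ g := strongConvexOn_iff_convex.mp hL
  have hnsq : ∀ z : EuclideanSpace ℝ (Fin n),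
      HasFDerivAt (fun w : EuclideanSpace ℝ (Fin n) => m / 2 * ‖w‖ ^ 2)
        ((m / 2) • (2 • (innerSL ℝ z))) z := fun z =>
    (hasStrictFDerivAt_norm_sq z).hasFDerivAt.const_mul (m / 2)
  have hgd : ∀ z, HasFDerivAt g (fderiv ℝ L z - (m / 2) • (2 • (innerSL ℝ z))) z := fun z =>
    (hLd z).hasFDerivAt.sub (hnsq z)
  have hgdiff : Differentiable ℝ g := fun z => (hgd z).differentiableAt
  have hfg : ∀ z v, fderiv ℝ g z v = fderiv ℝ L z v - m * ⟪z, v⟫ := by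
    intro z v
    rw [(hgd z).fderiv]
    simp only [ContinuousLinearMap.sub_apply, ContinuousLinearMap.smul_apply,
      innerSL_apply_apply]
    rw [two_smul]
    simp only [ContinuousLinearMap.add_apply, innerSL_apply_apply, smul_eq_mul]
    ring
  have h1 := aux_convex_fderiv_le hgc hgdiff x y
  have h2 := aux_convex_fderiv_le hgc hgdiff y x
  rw [hfg] at h1 h2
  have hinner : ⟪x, y - x⟫ + ⟪y, x - y⟫ = -‖x - y‖ ^ 2 := by
    simp only [← real_inner_self_eq_norm_sq, inner_sub_left, inner_sub_right]
    rw [real_inner_comm y x]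
    ring
  have hlx : fderiv ℝ L x (y - x) = -(fderiv ℝ L x (x - y)) := by
    rw [← map_neg]; congr 1; abel
  have hly : fderiv ℝ L y (x - y) = fderiv ℝ L y (x - y) := rfl
  -- add h1 and h2
  have hmul : m * ⟪x, y - x⟫ + m * ⟪y, x - y⟫ = -(m * ‖x - y‖ ^ 2) := by
    rw [← mul_add, hinner]; ring
  linarith [h1, h2, hmul.le, hmul.ge, hlx.le, hlx.ge]

set_option maxHeartbeats 1000000 in
/-- For `L_train(θ, λ) = L(θ) + λ·R(θ)` with `L` `m`-strongly convex and `R` convex,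
both differentiable, the best-response map satisfies
`‖θ*(λ₁) − θ*(λ₂)‖ ≤ |λ₁ − λ₂| · ‖∇R(θ*(λ₂))‖ / m` for all `λ₁, λ₂ ≥ 0`. -/
theorem stmt5 {n : ℕ} (m : ℝ) (hm : 0 < m)
    (L R : EuclideanSpace ℝ (Fin n) → ℝ)
    (hL : StrongConvexOn univ m L) (hLdiff : Differentiable ℝ L)
    (hR : ConvexOn ℝ univ R) (hRdiff : Differentiable ℝ R)
    (θstar : ℝ → EuclideanSpace ℝ (Fin n))
    (hθstar : ∀ lam ∈ Ici (0 : ℝ), ∀ θ,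
      L (θstar lam) + lam * R (θstar lam) ≤ L θ + lam * R θ)
    (lam₁ lam₂ : ℝ) (h₁ : 0 ≤ lam₁) (h₂ : 0 ≤ lam₂) :
    ‖θstar lam₁ - θstar lam₂‖ ≤ |lam₁ - lam₂| * ‖gradient R (θstar lam₂)‖ / m := by
  set θ₁ := θstar lam₁ with hθ₁
  set θ₂ := θstar lam₂ with hθ₂
  set d := θ₁ - θ₂ with hd
  by_cases hd0 : d = 0
  · rw [hd0, norm_zero]
    positivity
  -- optimality conditions
  have hopt : ∀ lam : ℝ, 0 ≤ lam →
      fderiv ℝ L (θstar lam) + lam • fderiv ℝ R (θstar lam) = 0 := by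
    intro lam hlam
    set F : EuclideanSpace ℝ (Fin n) → ℝ := fun θ => L θ + lam * R θ with hF
    have hFd : ∀ z, HasFDerivAt F (fderiv ℝ L z + lam • fderiv ℝ R z) z := fun z =>
      (hLdiff z).hasFDerivAt.add ((hRdiff z).hasFDerivAt.const_mul lam)
    have hmin : IsLocalMin F (θstar lam) :=
      Filter.Eventually.of_forall (fun θ => hθstar lam hlam θ)
    have hzero := hmin.fderiv_eq_zero
    rw [(hFd (θstar lam)).fderiv] at hzero
    exact hzero
  have hopt₁ := hopt lam₁ h₁
  have hopt₂ := hopt lam₂ h₂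
  have he₁ : fderiv ℝ L θ₁ d = -(lam₁ * fderiv ℝ R θ₁ d) := by
    have := congrArg (fun T : EuclideanSpace ℝ (Fin n) →L[ℝ] ℝ => T d) hopt₁
    simp only [ContinuousLinearMap.add_apply, ContinuousLinearMap.smul_apply,
      ContinuousLinearMap.zero_apply, smul_eq_mul] at this
    linarith
  have he₂ : fderiv ℝ L θ₂ d = -(lam₂ * fderiv ℝ R θ₂ d) := by
    have := congrArg (fun T : EuclideanSpace ℝ (Fin n) →L[ℝ] ℝ => T d) hopt₂
    simp only [ContinuousLinearMap.add_apply, ContinuousLinearMap.smul_apply,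
      ContinuousLinearMap.zero_apply, smul_eq_mul] at this
    linarith
  -- strong monotonicity
  have hmono := aux_strong_mono hL hLdiff θ₁ θ₂
  rw [← hd] at hmono
  -- monotonicity of ∇R
  have hr1 := aux_convex_fderiv_le hR hRdiff θ₂ θ₁
  have hr2 := aux_convex_fderiv_le hR hRdiff θ₁ θ₂
  have hRd2 : fderiv ℝ R θ₂ (θ₁ - θ₂) = fderiv ℝ R θ₂ d := by rw [hd]
  have hRneg : fderiv ℝ R θ₁ (θ₂ - θ₁) = -(fderiv ℝ R θ₁ d) := by
    rw [← map_neg]; congr 1; rw [hd]; abel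
  have hRmono : fderiv ℝ R θ₂ d ≤ fderiv ℝ R θ₁ d := by
    rw [hRd2] at hr1
    rw [hRneg] at hr2
    linarith
  -- chain of inequalities
  have hkey : m * ‖d‖ ^ 2 ≤ (lam₂ - lam₁) * fderiv ℝ R θ₂ d := by
    have : fderiv ℝ L θ₁ d - fderiv ℝ L θ₂ d
        = (lam₂ - lam₁) * fderiv ℝ R θ₂ d - lam₁ * (fderiv ℝ R θ₁ d - fderiv ℝ R θ₂ d) := by
      rw [he₁, he₂]; ring
    nlinarith [hmono, mul_nonneg h₁ (sub_nonneg.mpr hRmono)]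
  have hcs : (lam₂ - lam₁) * fderiv ℝ R θ₂ d ≤ |lam₁ - lam₂| * (‖gradient R θ₂‖ * ‖d‖) := by
    have hie : fderiv ℝ R θ₂ d = ⟪gradient R θ₂, d⟫ := aux_fderiv_eq_inner hRdiff θ₂ d
    calc (lam₂ - lam₁) * fderiv ℝ R θ₂ d ≤ |(lam₂ - lam₁) * fderiv ℝ R θ₂ d| := le_abs_self _
      _ = |lam₁ - lam₂| * |⟪gradient R θ₂, d⟫| := by
          rw [abs_mul, hie, abs_sub_comm]
      _ ≤ |lam₁ - lam₂| * (‖gradient R θ₂‖ * ‖d‖) := by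
          exact mul_le_mul_of_nonneg_left (abs_real_inner_le_norm _ _) (abs_nonneg _)
  have hdn : 0 < ‖d‖ := norm_pos_iff.mpr hd0
  have hfinal : m * ‖d‖ ≤ |lam₁ - lam₂| * ‖gradient R θ₂‖ := by
    have h := hkey.trans hcs
    nlinarith
  rw [le_div_iff₀ hm]
  nlinarith [hfinal]
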